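/- arXiv:1805.09576 — 5 statements merged into one kernel-verified Lean document; each statement's English description precedes it below -/
import Mathlib

section
/- Let m ≥ 1, let A be a real m×m symmetric matrix, and let i be a fixed index. Then equality A_{ii}·(trace(A) − A_{ii}) − ∑_{j ≠ i} (A_{ji})² = (trace(A))²/8 + (A_{ii})² holds if and only if A_{ji} = 0 for every j ≠ i and trace(A) = 4·A_{ii} (equivalently, ∑_{j ≠ i} A_{jj} = 3·A_{ii}). -/
/-! Completing the square: `t²/8 + a² - (a (t - a) - S) = (t - 4a)²/8 + S`, a sum of two
nonnegative terms, which vanishes exactly when `t = 4a` and the off-diagonal sum of squares `S`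
is zero. -/

theorem Finset.sum_sq_eq_zero_iff {ι R : Type*} [Semiring R] [LinearOrder R]
    [IsStrictOrderedRing R] [ExistsAddOfLE R] (s : Finset ι) (f : ι → R) :
    ∑ i ∈ s, f i ^ 2 = 0 ↔ ∀ i ∈ s, f i = 0 := by
  simpa only [sq] using Finset.sum_mul_self_eq_zero_iff s f

theorem mul_sub_sub_eq_sq_div_eight_add_sq_iff {K : Type*} [Field K] [LinearOrder K]
    [IsStrictOrderedRing K] {a t S : K} (hS : 0 ≤ S) :
    a * (t - a) - S = t ^ 2 / 8 + a ^ 2 ↔ S = 0 ∧ t = 4 * a := by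
  have key : t ^ 2 / 8 + a ^ 2 - (a * (t - a) - S) = (t - 4 * a) ^ 2 / 8 + S := by ring
  rw [eq_comm, ← sub_eq_zero, key, add_eq_zero_iff_of_nonneg (by positivity) hS,
    div_eq_zero_iff, pow_eq_zero_iff two_ne_zero, sub_eq_zero]
  norm_num [and_comm]

theorem ricci_equality_core_general (m : ℕ)
    (A : Matrix (Fin m) (Fin m) ℝ) (i : Fin m) :
    A i i * (A.trace - A i i) - ∑ j ∈ Finset.univ.erase i, (A j i) ^ 2 =
      (A.trace) ^ 2 / 8 + (A i i) ^ 2 ↔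
    (∀ j, j ≠ i → A j i = 0) ∧ A.trace = 4 * A i i := by
  rw [mul_sub_sub_eq_sq_div_eight_add_sq_iff (Finset.sum_nonneg fun j _ ↦ sq_nonneg (A j i)),
    Finset.sum_sq_eq_zero_iff]
  simp only [Finset.mem_erase, Finset.mem_univ, and_true]

/-- Equality case of the algebraic core of the Ricci curvature inequality:
for a real symmetric `m × m` matrix `A` and an index `i`, equality
`A i i * (tr A - A i i) - ∑_{j ≠ i} (A j i)² = (tr A)²/8 + (A i i)²`
holds iff `A j i = 0` for every `j ≠ i` and `tr A = 4 * A i i`. -/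
theorem ricci_equality_core (m : ℕ) (hm : 1 ≤ m)
    (A : Matrix (Fin m) (Fin m) ℝ) (hA : A.IsSymm) (i : Fin m) :
    A i i * (A.trace - A i i) - ∑ j ∈ Finset.univ.erase i, (A j i) ^ 2 =
      (A.trace) ^ 2 / 8 + (A i i) ^ 2 ↔
    (∀ j, j ≠ i → A j i = 0) ∧ A.trace = 4 * A i i :=
  ricci_equality_core_general m A i
end

section
/- For every real t > 0, one has 2·tanh(2t) ≠ 3·tanh(t) − coth(t) and 2·tanh(2t) ≠ 3·coth(t) − tanh(t). -/
/-!
In terms of `x = tanh t` one has `tanh (2t) = 2x / (1 + x²)` and `coth t = 1 / x`, and clearing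
denominators turns the two equations into `(3x² + 1)(x² - 1) = 0` and `(x² + 3)(x² - 1) = 0`.
Both force `x² = 1`, which is impossible since `|tanh t| < 1`.
-/

open Real

namespace Real

theorem tanh_two_mul (t : ℝ) : tanh (2 * t) = 2 * tanh t / (1 + tanh t ^ 2) := by
  have hc : cosh t ≠ 0 := (cosh_pos t).ne'
  rw [tanh_eq_sinh_div_cosh, tanh_eq_sinh_div_cosh, sinh_two_mul, cosh_two_mul]
  field_simp

theorem cosh_div_sinh_eq_inv_tanh (t : ℝ) : cosh t / sinh t = (tanh t)⁻¹ := by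
  rw [tanh_eq_sinh_div_cosh, inv_div]

theorem tanh_ne_zero {t : ℝ} (ht : t ≠ 0) : tanh t ≠ 0 := by
  simpa only [tanh_zero] using tanh_injective.ne ht

end Real

theorem sq_eq_one_of_two_mul_div_one_add_sq_eq_three_mul_sub_inv {x : ℝ} (hx : x ≠ 0)
    (h : 2 * (2 * x / (1 + x ^ 2)) = 3 * x - x⁻¹) : x ^ 2 = 1 := by
  have hden : 1 + x ^ 2 ≠ 0 := by positivity
  field_simp at h
  have hfactor : (3 * x ^ 2 + 1) * (x ^ 2 - 1) = 0 := by linear_combination -h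
  have hpos : 3 * x ^ 2 + 1 ≠ 0 := by positivity
  exact sub_eq_zero.mp ((mul_eq_zero.mp hfactor).resolve_left hpos)

theorem sq_eq_one_of_two_mul_div_one_add_sq_eq_three_mul_inv_sub {x : ℝ} (hx : x ≠ 0)
    (h : 2 * (2 * x / (1 + x ^ 2)) = 3 * x⁻¹ - x) : x ^ 2 = 1 := by
  have hden : 1 + x ^ 2 ≠ 0 := by positivity
  field_simp at h
  have hfactor : (x ^ 2 + 3) * (x ^ 2 - 1) = 0 := by linear_combination h
  have hpos : x ^ 2 + 3 ≠ 0 := by positivity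
  exact sub_eq_zero.mp ((mul_eq_zero.mp hfactor).resolve_left hpos)

/-- For every `t > 0`, `2 tanh (2t) ≠ 3 tanh t - coth t` and
`2 tanh (2t) ≠ 3 coth t - tanh t`. -/
theorem tanh_equations_no_solution (t : ℝ) (ht : 0 < t) :
    2 * Real.tanh (2 * t) ≠ 3 * Real.tanh t - Real.cosh t / Real.sinh t ∧
      2 * Real.tanh (2 * t) ≠
        3 * (Real.cosh t / Real.sinh t) - Real.tanh t := by
  have hx : tanh t ≠ 0 := tanh_ne_zero ht.ne'
  have hsq : tanh t ^ 2 ≠ 1 := (tanh_sq_lt_one t).ne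
  rw [tanh_two_mul, cosh_div_sinh_eq_inv_tanh]
  exact ⟨fun h ↦ hsq (sq_eq_one_of_two_mul_div_one_add_sq_eq_three_mul_sub_inv hx h),
    fun h ↦ hsq (sq_eq_one_of_two_mul_div_one_add_sq_eq_three_mul_inv_sub hx h)⟩
end

section
/- Let α, β, γ, μ, c be real numbers with β ≠ 0 satisfying the three equations: (1) α + γ − 3μ = 0; (2) β² + γ² + μ(α − 2γ) + c = 0; (3) (γ − μ)(γ² − αγ − c) + β²(2γ + μ) = 0. Then c < 0 and there exists a real number u with −1 < u < 1 such that μ = √(−c)·u, γ = √(−c)·u³, α = √(−c)·(3u − u³), and β² = (−c)·(1 − u²)³. -/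
/-!
Eliminating `α = 3μ - γ`, equation (2) reads `β² + c = -(γ² - 3μγ + 3μ²)`, and the right side
is a negative semidefinite quadratic form, so `c < -β² < 0`. Equation (3) then collapses to
`μ³ = -c γ`. Writing `k = √(-c)` and `u = μ / k` gives `γ = k u³`, and (2) becomes
`β² = k² (1 - u²)³`, which forces `|u| < 1` because `β ≠ 0`.
-/

lemma sq_sub_three_mul_add_three_sq_nonneg (x y : ℝ) : 0 ≤ x ^ 2 - 3 * x * y + 3 * y ^ 2 := by
  nlinarith [sq_nonneg (2 * x - 3 * y), sq_nonneg y]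

lemma abs_lt_one_of_one_sub_sq_cube_pos {u : ℝ} (h : 0 < (1 - u ^ 2) ^ 3) : |u| < 1 := by
  rw [← sq_lt_one_iff_abs_lt_one]
  linarith [(Odd.pow_pos_iff (by decide : Odd 3)).mp h]

section Equilibrium

variable {α β γ μ c : ℝ}

lemma sq_add_eq_of_equilibrium (h1 : α + γ - 3 * μ = 0)
    (h2 : β ^ 2 + γ ^ 2 + μ * (α - 2 * γ) + c = 0) :
    β ^ 2 + c = -(γ ^ 2 - 3 * γ * μ + 3 * μ ^ 2) := by
  linear_combination h2 - μ * h1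

lemma cube_eq_of_equilibrium (h1 : α + γ - 3 * μ = 0)
    (h2 : β ^ 2 + γ ^ 2 + μ * (α - 2 * γ) + c = 0)
    (h3 : (γ - μ) * (γ ^ 2 - α * γ - c) + β ^ 2 * (2 * γ + μ) = 0) :
    μ ^ 3 = -c * γ := by
  linear_combination (-1 / 3 : ℝ) * h3 + ((2 * γ + μ) / 3) * h2 -
    ((γ ^ 2 + μ * γ + μ ^ 2) / 3) * h1

end Equilibrium

/-- Constant solutions of the 2-Hopf structure system are the shape operators
of the Lohnherr hypersurface and its equidistant hypersurfaces in ℂH². -/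
theorem lohnherr_classification (α β γ μ c : ℝ) (hβ : β ≠ 0)
    (h1 : α + γ - 3 * μ = 0)
    (h2 : β ^ 2 + γ ^ 2 + μ * (α - 2 * γ) + c = 0)
    (h3 : (γ - μ) * (γ ^ 2 - α * γ - c) + β ^ 2 * (2 * γ + μ) = 0) :
    c < 0 ∧ ∃ u : ℝ, -1 < u ∧ u < 1 ∧
      μ = Real.sqrt (-c) * u ∧
      γ = Real.sqrt (-c) * u ^ 3 ∧
      α = Real.sqrt (-c) * (3 * u - u ^ 3) ∧
      β ^ 2 = (-c) * (1 - u ^ 2) ^ 3 := by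
  have hβ2 : 0 < β ^ 2 := by positivity
  have hβc := sq_add_eq_of_equilibrium h1 h2
  have hc : c < 0 := by linarith [sq_sub_three_mul_add_three_sq_nonneg γ μ]
  set k := Real.sqrt (-c)
  have hk : 0 < k := Real.sqrt_pos.mpr (neg_pos.mpr hc)
  have hk2 : k ^ 2 = -c := Real.sq_sqrt (neg_nonneg.mpr hc.le)
  obtain ⟨u, rfl⟩ : ∃ u, μ = k * u := ⟨μ / k, (mul_div_cancel₀ μ hk.ne').symm⟩
  obtain rfl : γ = k * u ^ 3 := by
    refine mul_left_cancel₀ (pow_ne_zero 2 hk.ne') ?_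
    linear_combination γ * hk2 - cube_eq_of_equilibrium h1 h2 h3
  have hβu : β ^ 2 = -c * (1 - u ^ 2) ^ 3 := by
    linear_combination hβc + ((1 - u ^ 2) ^ 3 - 1) * hk2
  have hu := abs_lt_one_of_one_sub_sq_cube_pos
    (pos_of_mul_pos_right (hβu ▸ hβ2) (neg_nonneg.mpr hc.le))
  exact ⟨hc, u, (abs_lt.mp hu).1, (abs_lt.mp hu).2, rfl, rfl, by linear_combination h1, hβu⟩
end

section
/- Let c < 0 be a real number and let u be a real number with −1 < u < 1. Define α = √(−c)·(3u − u³), β = √(−c)·(1 − u²)^{3/2}, γ = √(−c)·u³, and μ = √(−c)·u. Then β > 0 and the three equations hold: (1) α + γ − 3μ = 0; (2) β² + γ² + μ(α − 2γ) + c = 0; (3) (γ − μ)(γ² − αγ − c) + β²(2γ + μ) = 0. -/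
/-!
With `s = √(-c)` all of `α, γ, μ` are `s` times polynomials in `u`, and
`β² = s² (1 - u²)³`. Since `s² = -c`, each equation becomes a polynomial identity
in `s` and `u` once `c` and `β²` are eliminated; `β > 0` because `|u| < 1`.
-/

theorem Real.rpow_div_two_sq {x : ℝ} (hx : 0 ≤ x) (r : ℝ) : (x ^ (r / 2)) ^ 2 = x ^ r := by
  rw [← Real.rpow_natCast, ← Real.rpow_mul hx]
  norm_num

def IsTwoHopfEquilibrium (α β γ μ c : ℝ) : Prop :=
  α + γ - 3 * μ = 0 ∧
    β ^ 2 + γ ^ 2 + μ * (α - 2 * γ) + c = 0 ∧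
    (γ - μ) * (γ ^ 2 - α * γ - c) + β ^ 2 * (2 * γ + μ) = 0

theorem isTwoHopfEquilibrium_lohnherr {s u β c : ℝ} (hs : s ^ 2 = -c)
    (hβ : β ^ 2 = s ^ 2 * (1 - u ^ 2) ^ 3) :
    IsTwoHopfEquilibrium (s * (3 * u - u ^ 3)) β (s * u ^ 3) (s * u) c := by
  refine ⟨by ring, ?_, ?_⟩
  · linear_combination hβ + hs
  · linear_combination s * (2 * u ^ 3 + u) * hβ + s * (u - u ^ 3) * hs

/-- The shape operator data of the Lohnherr hypersurface and of its
equidistant hypersurfaces in ℂH²(4c) satisfy the equilibrium conditions of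
the 2-Hopf structure system. -/
theorem lohnherr_satisfies_system (c u : ℝ) (hc : c < 0)
    (hu1 : -1 < u) (hu2 : u < 1) :
    let α := Real.sqrt (-c) * (3 * u - u ^ 3)
    let β := Real.sqrt (-c) * (1 - u ^ 2) ^ ((3 : ℝ) / 2)
    let γ := Real.sqrt (-c) * u ^ 3
    let μ := Real.sqrt (-c) * u
    0 < β ∧
      α + γ - 3 * μ = 0 ∧
      β ^ 2 + γ ^ 2 + μ * (α - 2 * γ) + c = 0 ∧
      (γ - μ) * (γ ^ 2 - α * γ - c) + β ^ 2 * (2 * γ + μ) = 0 := by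
  intro α β γ μ
  have hc' : 0 < -c := neg_pos.mpr hc
  have hv : 0 < 1 - u ^ 2 := by nlinarith
  have hβ_pos : 0 < β := mul_pos (Real.sqrt_pos.mpr hc') (Real.rpow_pos_of_pos hv _)
  have hβ_sq : β ^ 2 = Real.sqrt (-c) ^ 2 * (1 - u ^ 2) ^ 3 := by
    rw [mul_pow, Real.rpow_div_two_sq hv.le]
    norm_cast
  exact ⟨hβ_pos, isTwoHopfEquilibrium_lohnherr (Real.sq_sqrt hc'.le) hβ_sq⟩
end

section
/- Let β, γ, μ, c, χ₁ be real numbers with β ≠ 0. Suppose that β·χ₁ − β² + 3γμ − 2γ² + c = 0 and that (χ₁ − 3β)·2((μ − 2γ)χ₁ + (6μ − 10γ)β) − (χ₁² + 3βχ₁ − 12β² + 2γ² − 7γμ + 3μ² + c)·(3μ − 4γ) = 0. Then 4β⁴(4γ − μ) + β²(16γ³ + 2cμ − 56γ²μ + 48γμ² − 9μ³) − μ(c − 2γ² + 3γμ)² = 0. -/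
theorem elimination_eq7_general (β γ μ c χ₁ : ℝ)
    (h1 : β * χ₁ - β ^ 2 + 3 * γ * μ - 2 * γ ^ 2 + c = 0)
    (h2 : (χ₁ - 3 * β) *
          (2 * ((μ - 2 * γ) * χ₁ + (6 * μ - 10 * γ) * β)) -
        (χ₁ ^ 2 + 3 * β * χ₁ - 12 * β ^ 2 + 2 * γ ^ 2 - 7 * γ * μ +
            3 * μ ^ 2 + c) * (3 * μ - 4 * γ) = 0) :
    4 * β ^ 4 * (4 * γ - μ) +
        β ^ 2 * (16 * γ ^ 3 + 2 * c * μ - 56 * γ ^ 2 * μ +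
          48 * γ * μ ^ 2 - 9 * μ ^ 3) -
      μ * (c - 2 * γ ^ 2 + 3 * γ * μ) ^ 2 = 0 := by
  -- (eq7) is the resultant in `χ₁`: `β²` times the determinant, reduced modulo (eq2),
  -- which is linear in `χ₁` with leading coefficient `β`.
  linear_combination β ^ 2 * h2 -
    (μ * (c - 2 * γ ^ 2 + 3 * γ * μ - β * χ₁) + 4 * β ^ 2 * (γ - μ)) * h1

/-- Elimination of `χ₁` from equation (eq2) and the vanishing determinant
condition yields the polynomial identity (eq7). -/
theorem elimination_eq7 (β γ μ c χ₁ : ℝ) (hβ : β ≠ 0)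
    (h1 : β * χ₁ - β ^ 2 + 3 * γ * μ - 2 * γ ^ 2 + c = 0)
    (h2 : (χ₁ - 3 * β) *
          (2 * ((μ - 2 * γ) * χ₁ + (6 * μ - 10 * γ) * β)) -
        (χ₁ ^ 2 + 3 * β * χ₁ - 12 * β ^ 2 + 2 * γ ^ 2 - 7 * γ * μ +
            3 * μ ^ 2 + c) * (3 * μ - 4 * γ) = 0) :
    4 * β ^ 4 * (4 * γ - μ) +
        β ^ 2 * (16 * γ ^ 3 + 2 * c * μ - 56 * γ ^ 2 * μ +
          48 * γ * μ ^ 2 - 9 * μ ^ 3) -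
      μ * (c - 2 * γ ^ 2 + 3 * γ * μ) ^ 2 = 0 :=
  elimination_eq7_general β γ μ c χ₁ h1 h2
end
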